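/- arXiv:1912.11551 — 2 statements merged into one kernel-verified Lean document; each statement's English description precedes it below -/
import Mathlib

section
/- Let A ∈ ℝ^{n×n} be skew-symmetric and b ∈ ℝ^n a nonzero vector. Then the row-wise generalized cross product A ⨯ b (with entries (A ⨯ b)_{ijk} = A_{ki} b_j − A_{kj} b_i) vanishes identically if and only if A = 0. -/
open Matrix

/-- Row-wise generalized cross product of a matrix with a vector:
`(P ⨯ b)_{ijk} = P_{ki} b_j − P_{kj} b_i`. -/
def crossMat {n : ℕ} (P : Matrix (Fin n) (Fin n) ℝ) (b : Fin n → ℝ)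
    (i j k : Fin n) : ℝ :=
  P k i * b j - P k j * b i

/-- For skew-symmetric `A` and nonzero `b`, the row-wise generalized cross
product `A ⨯ b` vanishes identically iff `A = 0`. -/
theorem crossMat_eq_zero_iff {n : ℕ} (A : Matrix (Fin n) (Fin n) ℝ)
    (hA : Aᵀ = -A) (b : Fin n → ℝ) (hb : b ≠ 0) :
    (∀ i j k : Fin n, crossMat A b i j k = 0) ↔ A = 0 := by
  constructor
  · intro h
    obtain ⟨j0, hj0⟩ : ∃ j0, b j0 ≠ 0 := by
      by_contra hc
      push_neg at hc
      exact hb (funext hc)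
    have hskew : ∀ i k, A k i = - A i k := fun i k => by
      have := congrFun (congrFun hA i) k
      simpa [Matrix.transpose_apply, Matrix.neg_apply] using this
    have key : ∀ k i, A k i * b j0 = A k j0 * b i := fun k i => by
      have := h i j0 k
      simp only [crossMat, sub_eq_zero] at this
      exact this
    have hdiag : A j0 j0 = 0 := by
      have := hskew j0 j0; linarith
    have hrow : ∀ i, A j0 i = 0 := fun i => by
      have h1 := key j0 i
      rw [hdiag, zero_mul] at h1
      rcases mul_eq_zero.mp h1 with h2 | h2
      · exact h2
      · exact absurd h2 hj0
    ext k i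
    have h1 := key k i
    have hk : A k j0 = 0 := by have := hskew k j0; rw [hrow k] at this; linarith
    rw [hk, zero_mul] at h1
    rcases mul_eq_zero.mp h1 with h2 | h2
    · simpa using h2
    · exact absurd h2 hj0
  · intro h i j k
    simp [crossMat, h]
end

section
/- Let Ω ⊆ ℝ^n be an open connected set and A : Ω → so(n) a continuously differentiable skew-symmetric matrix field. Then the generalized Curl of A vanishes identically on Ω (i.e., ∂_i A_{kj} = ∂_j A_{ki} for all i,j,k) if and only if A is constant. -/
/-!
The derivative tensor `D i k j = ∂ᵢ A_{kj}` is symmetric in `(i, j)` when the curl vanishes and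
antisymmetric in `(k, j)` because `A` is skew. Alternating the two symmetries six times turns `D`
into `-D`, so every first partial derivative of every entry vanishes, and on a connected open set
this forces `A` to be constant.
-/

open Matrix

/-- Partial derivative `∂ₖ f` of a scalar field on `ℝⁿ`. -/
noncomputable def pd {n : ℕ} (f : (Fin n → ℝ) → ℝ) (k : Fin n)
    (x : Fin n → ℝ) : ℝ :=
  fderiv ℝ f x (Pi.single k 1)

open Filter Topology

theorem eq_zero_of_symm_of_antisymm {ι M : Type*} [AddCommGroup M] [IsAddTorsionFree M]
    {D : ι → ι → ι → M} (hsymm : ∀ a b c, D a b c = D c b a)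
    (hanti : ∀ a b c, D a b c = -D a c b) (a b c : ι) : D a b c = 0 := by
  refine self_eq_neg.mp ?_
  calc D a b c = -D c a b := by rw [hsymm, hanti]
    _ = D b c a := by rw [hsymm, hanti, neg_neg]
    _ = -D a b c := by rw [hsymm, hanti]

section PartialDerivative

variable {n : ℕ}

theorem pd_congr_of_eventuallyEq {f g : (Fin n → ℝ) → ℝ} {x : Fin n → ℝ} (h : f =ᶠ[𝓝 x] g)
    (k : Fin n) : pd f k x = pd g k x := by
  rw [pd, pd, h.fderiv_eq]

theorem pd_neg (f : (Fin n → ℝ) → ℝ) (k : Fin n) (x : Fin n → ℝ) :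
    pd (fun y => -f y) k x = -pd f k x := by
  simp [pd]

theorem pd_eq_zero_of_eventually_eq_const {f : (Fin n → ℝ) → ℝ} {x : Fin n → ℝ} {c : ℝ}
    (h : ∀ᶠ y in 𝓝 x, f y = c) (k : Fin n) : pd f k x = 0 := by
  rw [pd_congr_of_eventuallyEq (g := fun _ => c) h k]
  simp [pd]

theorem fderiv_eq_zero_of_forall_pd_eq_zero {f : (Fin n → ℝ) → ℝ} {x : Fin n → ℝ}
    (h : ∀ k, pd f k x = 0) : fderiv ℝ f x = 0 :=
  ContinuousLinearMap.coe_injective <| (Pi.basisFun ℝ (Fin n)).ext fun k => by simpa [pd] using h k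

theorem IsOpen.exists_forall_eq_of_forall_pd_eq_zero {Ω : Set (Fin n → ℝ)} (hΩ : IsOpen Ω)
    (hconn : IsPreconnected Ω) {f : (Fin n → ℝ) → ℝ} (hf : DifferentiableOn ℝ f Ω)
    (hpd : ∀ x ∈ Ω, ∀ k, pd f k x = 0) : ∃ c, ∀ x ∈ Ω, f x = c :=
  hΩ.exists_is_const_of_fderiv_eq_zero hconn hf fun x hx =>
    fderiv_eq_zero_of_forall_pd_eq_zero (hpd x hx)

theorem pd_apply_eq_neg_pd_apply_swap {ι : Type*} {Ω : Set (Fin n → ℝ)} (hΩ : IsOpen Ω)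
    {A : (Fin n → ℝ) → Matrix ι ι ℝ} (hskew : ∀ x ∈ Ω, (A x)ᵀ = -(A x)) {x : Fin n → ℝ}
    (hx : x ∈ Ω) (i : Fin n) (j k : ι) :
    pd (fun y => A y j k) i x = -pd (fun y => A y k j) i x := by
  rw [← pd_neg]
  refine pd_congr_of_eventuallyEq ?_ i
  filter_upwards [hΩ.mem_nhds hx] with y hy
  simpa using congrFun₂ (hskew y hy) k j

end PartialDerivative

/-- For a C¹ skew-symmetric matrix field `A` on an open connected set `Ω`,
the generalized Curl of `A` vanishes identically on `Ω` iff `A` is constant. -/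
theorem curl_eq_zero_iff_const {n : ℕ} (Ω : Set (Fin n → ℝ))
    (hΩ : IsOpen Ω) (hconn : IsConnected Ω)
    (A : (Fin n → ℝ) → Matrix (Fin n) (Fin n) ℝ)
    (hA : ∀ i j, ContDiffOn ℝ 1 (fun x => A x i j) Ω)
    (hskew : ∀ x ∈ Ω, (A x)ᵀ = -(A x)) :
    (∀ x ∈ Ω, ∀ i j k : Fin n,
        pd (fun y => A y k j) i x = pd (fun y => A y k i) j x) ↔
      ∃ A₀ : Matrix (Fin n) (Fin n) ℝ, ∀ x ∈ Ω, A x = A₀ := by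
  constructor
  · intro hcurl
    have hpd : ∀ x ∈ Ω, ∀ i j k, pd (fun y => A y j k) i x = 0 := fun x hx =>
      eq_zero_of_symm_of_antisymm (D := fun i j k => pd (fun y => A y j k) i x)
        (fun a b c => hcurl x hx a c b) (fun a => pd_apply_eq_neg_pd_apply_swap hΩ hskew hx a)
    choose c hc using fun j k => hΩ.exists_forall_eq_of_forall_pd_eq_zero hconn.isPreconnected
      ((hA j k).differentiableOn one_ne_zero) fun x hx i => hpd x hx i j k
    exact ⟨Matrix.of c, fun x hx => Matrix.ext fun j k => hc j k x hx⟩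
  · rintro ⟨A₀, hA₀⟩ x hx i j k
    have hconst : ∀ a b, ∀ᶠ y in 𝓝 x, A y a b = A₀ a b := fun a b => by
      filter_upwards [hΩ.mem_nhds hx] with y hy
      rw [hA₀ y hy]
    rw [pd_eq_zero_of_eventually_eq_const (hconst k j),
      pd_eq_zero_of_eventually_eq_const (hconst k i)]
end
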